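/- arXiv:0903.4836 — 3 statements merged into one kernel-verified Lean document; each statement's English description precedes it below -/
import Mathlib

section
/- On a compact Riemann surface M of genus 2, the natural multiplication map Sym²H⁰(M; K) → H⁰(M; K²) is an isomorphism; in particular every holomorphic quadratic differential on M is a product of two holomorphic 1-forms. -/
lemma quad_factor (a b c : ℂ) :
    ∃ α β γ δ : ℂ, α * γ = a ∧ α * δ + β * γ = b ∧ β * δ = c := by
  by_cases ha : a = 0
  · exact ⟨0, 1, b, c, by simp [ha], by ring, by ring⟩
  · obtain ⟨s, hs⟩ := IsAlgClosed.exists_pow_nat_eq (b ^ 2 - 4 * a * c) (n := 2) (by norm_num)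
    refine ⟨a, (b + s) / 2, 1, (b - s) / (2 * a), by ring, by field_simp; ring, ?_⟩
    field_simp
    linear_combination -hs

lemma factor_in_A {A : Type*} [CommRing A] [Algebra ℂ A] (x y : A)
    {a b c α β γ δ : ℂ} (h1 : α * γ = a) (h2 : α * δ + β * γ = b) (h3 : β * δ = c) :
    a • (x * x) + b • (x * y) + c • (y * y) = (α • x + β • y) * (γ • x + δ • y) := by
  subst h1 h2 h3
  simp only [Algebra.smul_def, map_mul, map_add]
  ring


/-- On a compact Riemann surface `M` of genus 2, the
multiplication map `Sym² H⁰(M;K) → H⁰(M;K²)` is an isomorphism; in particular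
every holomorphic quadratic differential is the product of two holomorphic
1-forms.  Sections of all bundles are modelled inside one integral domain `A`
(the algebra of meromorphic sections), with `H0 L` the subspace of holomorphic
sections of `L ∈ Pic`, `h⁰(K) = 2`, `h⁰(K²) = 3`, and products of sections of
`L, L'` being sections of `L + L'`.  The isomorphism statement: every
`q ∈ H⁰(K²)` factors as `q = ω₁ω₂` with `ωᵢ ∈ H⁰(K)` (surjectivity, and
bijectivity follows since both sides are 3-dimensional), and the products
span all of `H⁰(K²)`. -/
theorem genus_two_sym_sq_of_one_forms_isomorphic_to_quadratic_differentials
    {Pic A : Type*} [AddCommGroup Pic] [CommRing A] [IsDomain A] [Algebra ℂ A]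
    (H0 : Pic → Submodule ℂ A) (K : Pic)
    (hmul : ∀ (L L' : Pic), ∀ a ∈ H0 L, ∀ b ∈ H0 L', a * b ∈ H0 (L + L'))
    (hdimK : Module.finrank ℂ (H0 K) = 2)
    (hdimK2 : Module.finrank ℂ (H0 (K + K)) = 3) :
    (∀ q ∈ H0 (K + K), ∃ a ∈ H0 K, ∃ b ∈ H0 K, q = a * b) ∧
    Submodule.span ℂ {x : A | ∃ a ∈ H0 K, ∃ b ∈ H0 K, x = a * b} = H0 (K + K) := by
  have fdK : FiniteDimensional ℂ (H0 K) := FiniteDimensional.of_finrank_eq_succ hdimK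
  have fdK2 : FiniteDimensional ℂ (H0 (K + K)) := FiniteDimensional.of_finrank_eq_succ hdimK2
  let bK := Module.finBasisOfFinrankEq ℂ (H0 K) hdimK
  set x : A := (bK 0 : A) with hxdef
  set y : A := (bK 1 : A) with hydef
  have hx : x ∈ H0 K := (bK 0).2
  have hy : y ∈ H0 K := (bK 1).2
  -- x, y linearly independent in A
  have li2 : LinearIndependent ℂ (fun i => ((bK i : A))) :=
    bK.linearIndependent.map' (H0 K).subtype (Submodule.ker_subtype _)
  have pairzero : ∀ α β : ℂ, α • x + β • y = 0 → α = 0 ∧ β = 0 := by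
    intro α β h
    have := (Fintype.linearIndependent_iff.mp li2) ![α, β] (by
      rw [Fin.sum_univ_two]; exact h)
    exact ⟨this 0, this 1⟩
  -- the three products
  set v : Fin 3 → A := ![x * x, x * y, y * y] with hv
  have hvmem : ∀ i, v i ∈ H0 (K + K) := by
    intro i
    fin_cases i
    · exact hmul K K x hx x hx
    · exact hmul K K x hx y hy
    · exact hmul K K y hy y hy
  have li3 : LinearIndependent ℂ v := by
    rw [Fintype.linearIndependent_iff]
    intro g hg
    obtain ⟨α, β, γ, δ, h1, h2, h3⟩ := quad_factor (g 0) (g 1) (g 2)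
    have heq : (α • x + β • y) * (γ • x + δ • y) = 0 := by
      rw [← factor_in_A x y h1 h2 h3]
      simpa [hv, Fin.sum_univ_three] using hg
    have hfac := mul_eq_zero.mp heq
    have hcoef : (α = 0 ∧ β = 0) ∨ (γ = 0 ∧ δ = 0) := by
      rcases hfac with h | h
      · exact Or.inl (pairzero α β h)
      · exact Or.inr (pairzero γ δ h)
    intro i
    fin_cases i <;>
      rcases hcoef with ⟨h, h'⟩ | ⟨h, h'⟩ <;>
      simp [← h1, ← h2, ← h3, h, h']
  -- span of the products equals H0 (K+K)
  have hspan_le : Submodule.span ℂ (Set.range v) ≤ H0 (K + K) := by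
    rw [Submodule.span_le]
    rintro _ ⟨i, rfl⟩
    exact hvmem i
  have hrank : Module.finrank ℂ (Submodule.span ℂ (Set.range v)) = 3 := by
    rw [finrank_span_eq_card li3]
    simp
  have hspan_eq : Submodule.span ℂ (Set.range v) = H0 (K + K) := by
    apply Submodule.eq_of_le_of_finrank_le hspan_le
    rw [hrank, hdimK2]
  have surj : ∀ q ∈ H0 (K + K), ∃ a ∈ H0 K, ∃ b ∈ H0 K, q = a * b := by
    intro q hq
    rw [← hspan_eq] at hq
    obtain ⟨g, hg⟩ := (Submodule.mem_span_range_iff_exists_fun ℂ).mp hq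
    obtain ⟨α, β, γ, δ, h1, h2, h3⟩ := quad_factor (g 0) (g 1) (g 2)
    refine ⟨α • x + β • y, ?_, γ • x + δ • y, ?_, ?_⟩
    · exact Submodule.add_mem _ (Submodule.smul_mem _ _ hx) (Submodule.smul_mem _ _ hy)
    · exact Submodule.add_mem _ (Submodule.smul_mem _ _ hx) (Submodule.smul_mem _ _ hy)
    · rw [← factor_in_A x y h1 h2 h3, ← hg]
      simp [hv, Fin.sum_univ_three]
  refine ⟨surj, le_antisymm ?_ ?_⟩
  · rw [Submodule.span_le]
    rintro z ⟨a, ha, b, hb, rfl⟩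
    exact hmul K K a ha b hb
  · rw [← hspan_eq]
    apply Submodule.span_mono
    rintro _ ⟨i, rfl⟩
    fin_cases i
    · exact ⟨x, hx, x, hx, rfl⟩
    · exact ⟨x, hx, y, hy, rfl⟩
    · exact ⟨y, hy, y, hy, rfl⟩
end

section
/- Let M be a compact Riemann surface, D and D̃ two distinct effective divisors with disjoint supports such that L(D) ≅ L(D̃), with canonical holomorphic sections s_D and s_{D̃} having divisors D and D̃ respectively. If α, β are holomorphic sections of L(D) with s_D·β + s_{D̃}·α = 0, then there exists λ ∈ ℂ with β = λ·s_{D̃} and α = −λ·s_D. -/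
/-!
The quotient `f = β / s_D̃ = -α / s_D` is a meromorphic function whose only possible poles lie
on `D̃` (from the first expression) and on `D` (from the second). As the supports are disjoint,
`f` is holomorphic everywhere, hence a constant `λ` on the compact surface.
-/

section Valuation

variable {F : Type*} [Field F] (v : F → ℤ)
  (hmul : ∀ a b : F, a ≠ 0 → b ≠ 0 → v (a * b) = v a + v b)
include hmul

theorem ord_one_of_mul : v 1 = 0 := by
  have h := hmul 1 1 one_ne_zero one_ne_zero
  rw [mul_one] at h
  omega

theorem ord_inv_of_mul {a : F} (ha : a ≠ 0) : v a⁻¹ = -v a := by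
  have h := hmul a a⁻¹ ha (inv_ne_zero ha)
  rw [mul_inv_cancel₀ ha, ord_one_of_mul v hmul] at h
  omega

theorem ord_div_of_mul {a b : F} (ha : a ≠ 0) (hb : b ≠ 0) : v (a / b) = v a - v b := by
  rw [div_eq_mul_inv, hmul a b⁻¹ ha (inv_ne_zero hb), ord_inv_of_mul v hmul hb, sub_eq_add_neg]

/-- `-1` is torsion in `Fˣ`, so every valuation kills it. -/
theorem ord_neg_one_of_mul : v (-1) = 0 := by
  have h := hmul (-1) (-1) (neg_ne_zero.2 one_ne_zero) (neg_ne_zero.2 one_ne_zero)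
  rw [neg_one_mul, neg_neg, ord_one_of_mul v hmul] at h
  omega

theorem ord_neg_of_mul {a : F} (ha : a ≠ 0) : v (-a) = v a := by
  rw [← neg_one_mul, hmul (-1) a (neg_ne_zero.2 one_ne_zero) ha, ord_neg_one_of_mul v hmul,
    zero_add]

end Valuation

theorem neg_le_ord_div_section {F Point : Type*} [Field F] (ord : Point → F → ℤ)
    (hordmul : ∀ (p : Point) (a b : F), a ≠ 0 → b ≠ 0 → ord p (a * b) = ord p a + ord p b)
    (E D : Point →₀ ℤ) {s β : F} (hs0 : s ≠ 0) (hβ0 : β ≠ 0) (p : Point)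
    (hs : ord p s + E p = D p) (hβ : 0 ≤ ord p β + E p) :
    -D p ≤ ord p (β / s) := by
  rw [ord_div_of_mul (ord p) (hordmul p) hβ0 hs0]
  omega

theorem Finsupp.eq_zero_or_eq_zero_of_disjoint_support {α M : Type*} [Zero M] {f g : α →₀ M}
    (h : Disjoint f.support g.support) (a : α) : f a = 0 ∨ g a = 0 := by
  by_contra! hfg
  exact Finset.disjoint_left.1 h (Finsupp.mem_support_iff.2 hfg.1)
    (Finsupp.mem_support_iff.2 hfg.2)

theorem sections_relation_forces_proportionality_general
    {F : Type*} [Field F] [Algebra ℂ F] {Point : Type*}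
    (ord : Point → F → ℤ)
    (hordmul : ∀ (p : Point) (a b : F), a ≠ 0 → b ≠ 0 →
      ord p (a * b) = ord p a + ord p b)
    (hconst : ∀ f : F, f ≠ 0 → (∀ p, 0 ≤ ord p f) → ∃ c : ℂ, f = algebraMap ℂ F c)
    (E D Dt : Point →₀ ℤ)
    (hdisj : Disjoint D.support Dt.support)
    (sD sDt : F) (hsD0 : sD ≠ 0) (hsDt0 : sDt ≠ 0)
    (hsD : ∀ p, ord p sD + E p = D p)
    (hsDt : ∀ p, ord p sDt + E p = Dt p)
    (α β : F)
    (hα : α = 0 ∨ ∀ p, 0 ≤ ord p α + E p)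
    (hβ : β = 0 ∨ ∀ p, 0 ≤ ord p β + E p)
    (heq : sD * β + sDt * α = 0) :
    ∃ lam : ℂ, β = algebraMap ℂ F lam * sDt ∧ α = -(algebraMap ℂ F lam * sD) := by
  by_cases hβ0 : β = 0
  · have hα0 : α = 0 := by simpa [hβ0, hsDt0] using heq
    exact ⟨0, by simp [hβ0], by simp [hα0]⟩
  have hα0 : α ≠ 0 := by
    rintro rfl
    exact mul_ne_zero hsD0 hβ0 (by simpa using heq)
  have hquot : β / sDt = -α / sD := by
    field_simp
    linear_combination heq
  obtain ⟨c, hc⟩ : ∃ c : ℂ, β / sDt = algebraMap ℂ F c := by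
    refine hconst _ (div_ne_zero hβ0 hsDt0) fun p => ?_
    rcases Finsupp.eq_zero_or_eq_zero_of_disjoint_support hdisj p with hDp | hDtp
    · have hnegα : 0 ≤ ord p (-α) + E p := by
        rw [ord_neg_of_mul (ord p) (hordmul p) hα0]
        exact (hα.resolve_left hα0) p
      simpa [hquot, hDp] using
        neg_le_ord_div_section ord hordmul E D hsD0 (neg_ne_zero.2 hα0) p (hsD p) hnegα
    · simpa [hDtp] using
        neg_le_ord_div_section ord hordmul E Dt hsDt0 hβ0 p (hsDt p) ((hβ.resolve_left hβ0) p)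
  refine ⟨c, (div_eq_iff hsDt0).1 hc, ?_⟩
  rw [← (div_eq_iff hsD0).1 (hquot ▸ hc), neg_neg]

/-- Let `M` be a compact Riemann surface, `D ≠ D̃` effective
divisors with disjoint supports and `L(D) ≅ L(D̃) =: L`.  We model sections of
`L` in the function field `F` of `M`: fixing a divisor `E` with `L = L(E)`,
holomorphic sections of `L` are the `f ∈ F` with `ord_p f + E p ≥ 0` for all
`p`; `ord` is the order-of-vanishing valuation, multiplicative on products,
vanishing on nonzero constants, and a nonzero function that is everywhere
holomorphic is a constant (compactness).  `s_D` and `s_D̃` are the sections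
with divisors `D` resp. `D̃`.  If `α, β` are holomorphic sections of `L` with
`s_D·β + s_D̃·α = 0` (an equation in `H⁰(L²)`), then there is `λ ∈ ℂ` with
`β = λ·s_D̃` and `α = -λ·s_D`. -/
theorem sections_relation_forces_proportionality
    {F : Type*} [Field F] [Algebra ℂ F] {Point : Type*}
    (ord : Point → F → ℤ)
    (hordmul : ∀ (p : Point) (a b : F), a ≠ 0 → b ≠ 0 →
      ord p (a * b) = ord p a + ord p b)
    (hordconst : ∀ (p : Point) (c : ℂ), c ≠ 0 → ord p (algebraMap ℂ F c) = 0)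
    (hconst : ∀ f : F, f ≠ 0 → (∀ p, 0 ≤ ord p f) → ∃ c : ℂ, f = algebraMap ℂ F c)
    (E D Dt : Point →₀ ℤ)
    (hDeff : 0 ≤ D) (hDteff : 0 ≤ Dt) (hne : D ≠ Dt)
    (hdisj : Disjoint D.support Dt.support)
    (sD sDt : F) (hsD0 : sD ≠ 0) (hsDt0 : sDt ≠ 0)
    (hsD : ∀ p, ord p sD + E p = D p)
    (hsDt : ∀ p, ord p sDt + E p = Dt p)
    (α β : F)
    (hα : α = 0 ∨ ∀ p, 0 ≤ ord p α + E p)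
    (hβ : β = 0 ∨ ∀ p, 0 ≤ ord p β + E p)
    (heq : sD * β + sDt * α = 0) :
    ∃ lam : ℂ, β = algebraMap ℂ F lam * sDt ∧ α = -(algebraMap ℂ F lam * sD) :=
  sections_relation_forces_proportionality_general ord hordmul hconst E D Dt hdisj sD sDt hsD0 hsDt0
    hsD hsDt α β hα hβ heq
end

section
/- Let M be a compact Riemann surface of genus 2 and S a spin bundle with h⁰(S) = 0. The subspace W ⊂ H⁰(M; K³) spanned by all products αβ with α, β ∈ H⁰(M; K ⊗ S) is 3-dimensional, and every element of W can itself be written as a product αβ of two elements of H⁰(M; K ⊗ S). -/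
/-!
With a basis `α, β` of `H⁰(KS)`, the product `(pα + qβ)(rα + sβ)` has coordinates
`(pr, ps + qr, qs)` on `α², αβ, β²`. Every binary quadratic form over an algebraically closed
field splits into linear factors, so the products are exactly the span of `α², αβ, β²`. These
three are independent because `A` is a domain: a vanishing combination of them factors as a
product of two combinations of `α, β`, one of which must then vanish identically.
-/

open Polynomial in
theorem IsAlgClosed.exists_factor_binary_quadratic {K : Type*} [Field K] [IsAlgClosed K]
    (a b c : K) :
    ∃ p q r s : K, a = p * r ∧ b = p * s + q * r ∧ c = q * s := by
  by_cases ha : a = 0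
  · exact ⟨0, 1, b, c, by simp [ha], by ring, by ring⟩
  -- a root `t` of `a X² + b X + c` gives `a x² + b xy + c y² = (x - t y)(a x + (b + a t) y)`
  obtain ⟨t, ht⟩ := IsAlgClosed.exists_root (C a * X ^ 2 + C b * X + C c)
    (by simp [degree_quadratic ha])
  simp only [IsRoot, eval_add, eval_mul, eval_C, eval_pow, eval_X] at ht
  exact ⟨1, -t, a, b + a * t, by ring, by ring, by linear_combination ht⟩

theorem smul_add_smul_mul_smul_add_smul {K A : Type*} [CommSemiring K] [CommSemiring A]
    [Algebra K A] (p q r s : K) (α β : A) :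
    (p • α + q • β) * (r • α + s • β) =
      (p * r) • (α * α) + (p * s + q * r) • (α * β) + (q * s) • (β * β) := by
  simp only [Algebra.smul_def, map_mul, map_add]
  ring

section

variable {K A : Type*} [Field K] [CommRing A] [Algebra K A]

theorem setOf_mul_span_pair_eq_span_triple [IsAlgClosed K] (α β : A) :
    {x : A | ∃ a ∈ Submodule.span K {α, β}, ∃ b ∈ Submodule.span K {α, β}, x = a * b} =
      Submodule.span K {α * α, α * β, β * β} := by
  ext x
  simp only [Set.mem_ofPred_eq, SetLike.mem_coe, Submodule.mem_span_pair,
    Submodule.mem_span_triple]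
  constructor
  · rintro ⟨_, ⟨p, q, rfl⟩, _, ⟨r, s, rfl⟩, rfl⟩
    exact ⟨_, _, _, (smul_add_smul_mul_smul_add_smul p q r s α β).symm⟩
  · rintro ⟨a, b, c, rfl⟩
    obtain ⟨p, q, r, s, rfl, rfl, rfl⟩ := IsAlgClosed.exists_factor_binary_quadratic a b c
    exact ⟨_, ⟨p, q, rfl⟩, _, ⟨r, s, rfl⟩, (smul_add_smul_mul_smul_add_smul p q r s α β).symm⟩

theorem LinearIndependent.products_of_pair [IsAlgClosed K] [NoZeroDivisors A] {α β : A}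
    (h : LinearIndependent K ![α, β]) : LinearIndependent K ![α * α, α * β, β * β] := by
  rw [LinearIndependent.pair_iff] at h
  rw [Fintype.linearIndependent_iff]
  intro g hg
  obtain ⟨p, q, r, s, h0, h1, h2⟩ := IsAlgClosed.exists_factor_binary_quadratic (g 0) (g 1) (g 2)
  have hprod : (p • α + q • β) * (r • α + s • β) = 0 := by
    rw [smul_add_smul_mul_smul_add_smul, ← h0, ← h1, ← h2, ← hg]
    simp [Fin.sum_univ_three]
  have hvanish : (p = 0 ∧ q = 0) ∨ (r = 0 ∧ s = 0) := (mul_eq_zero.mp hprod).imp (h p q) (h r s)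
  intro i
  fin_cases i <;> rcases hvanish with ⟨rfl, rfl⟩ | ⟨rfl, rfl⟩ <;> simp [h0, h1, h2]

theorem Submodule.exists_linearIndependent_pair_of_finrank_eq_two {V : Submodule K A}
    (h : Module.finrank K V = 2) :
    ∃ α β : A, LinearIndependent K ![α, β] ∧ V = Submodule.span K {α, β} := by
  have : Module.Finite K V := Module.finite_of_finrank_eq_succ h
  let b := Module.finBasisOfFinrankEq K V h
  have hb : V.subtype ∘ b = ![(b 0 : A), b 1] := by
    ext i; fin_cases i <;> rfl
  refine ⟨b 0, b 1, hb ▸ b.linearIndependent.map' V.subtype V.ker_subtype, ?_⟩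
  calc V = (⊤ : Submodule K V).map V.subtype := by simp
    _ = Submodule.span K (Set.range (V.subtype ∘ b)) := by
      rw [← b.span_eq, Set.range_comp, Submodule.span_image]
    _ = Submodule.span K {(b 0 : A), (b 1 : A)} := by rw [hb, Matrix.range_cons_cons_empty]

end

/-- Sections of line bundles on `M` are modelled as elements of an integral domain `A` of
meromorphic functions, with `H0KS = H⁰(M; K ⊗ S)`. -/
theorem span_of_products_is_three_dimensional_and_decomposable_general
    {A : Type*} [CommRing A] [IsDomain A] [Algebra ℂ A]
    (H0KS : Submodule ℂ A)
    (hdimKS : Module.finrank ℂ H0KS = 2) :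
    Module.finrank ℂ
      (Submodule.span ℂ {x : A | ∃ a ∈ H0KS, ∃ b ∈ H0KS, x = a * b}) = 3 ∧
    ∀ ψ ∈ Submodule.span ℂ {x : A | ∃ a ∈ H0KS, ∃ b ∈ H0KS, x = a * b},
      ∃ a ∈ H0KS, ∃ b ∈ H0KS, ψ = a * b := by
  obtain ⟨α, β, hli, rfl⟩ := H0KS.exists_linearIndependent_pair_of_finrank_eq_two hdimKS
  have hW := setOf_mul_span_pair_eq_span_triple (K := ℂ) α β
  have hdim := finrank_span_eq_card hli.products_of_pair
  rw [Matrix.range_cons, Matrix.range_cons_cons_empty, Set.singleton_union] at hdim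
  rw [hW, Submodule.span_eq]
  refine ⟨by simpa using hdim, fun ψ hψ => ?_⟩
  rwa [← SetLike.mem_coe, ← hW] at hψ

/-- Genus 2, spin bundle `S` with `h⁰(S) = 0`, so that
`h⁰(KS) = 2` and `h⁰(K³) = 5`.  Sections are modelled inside an integral
domain `A` (meromorphic sections), `H0KS = H⁰(M;K⊗S)`,
`H0K3 = H⁰(M;K³)`, products of two sections of `KS` landing in `K³`.
The subspace `W ⊂ H⁰(M;K³)` spanned by the products `αβ` with
`α, β ∈ H⁰(KS)` is 3-dimensional, and every element of `W` is itself such a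
product. -/
theorem span_of_products_is_three_dimensional_and_decomposable
    {A : Type*} [CommRing A] [IsDomain A] [Algebra ℂ A]
    (H0KS H0K3 : Submodule ℂ A)
    (hdimKS : Module.finrank ℂ H0KS = 2)
    (hdimK3 : Module.finrank ℂ H0K3 = 5)
    (hmul : ∀ a ∈ H0KS, ∀ b ∈ H0KS, a * b ∈ H0K3) :
    Module.finrank ℂ
      (Submodule.span ℂ {x : A | ∃ a ∈ H0KS, ∃ b ∈ H0KS, x = a * b}) = 3 ∧
    ∀ ψ ∈ Submodule.span ℂ {x : A | ∃ a ∈ H0KS, ∃ b ∈ H0KS, x = a * b},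
      ∃ a ∈ H0KS, ∃ b ∈ H0KS, ψ = a * b :=
  span_of_products_is_three_dimensional_and_decomposable_general H0KS hdimKS
end
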